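/- arXiv:2101.04534 — 3 statements merged into one kernel-verified Lean document; each statement's English description precedes it below -/
import Mathlib

section
/- There exists a group homomorphism α : F₃ → F satisfying α(yₙ) = xₙ·xₙ₊₁ for every n ∈ ℕ. -/
/-- Relators of Thompson's group `F`: `xₙ·xₖ·xₙ₊₁⁻¹·xₖ⁻¹` for `k < n`. -/
def thompsonRels : Set (FreeGroup ℕ) :=
  {r | ∃ n k : ℕ, k < n ∧
    r = FreeGroup.of n * FreeGroup.of k * (FreeGroup.of (n + 1))⁻¹ * (FreeGroup.of k)⁻¹}

/-- Thompson's group `F` as a presented group. -/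
abbrev ThompsonF : Type := PresentedGroup thompsonRels

/-- The generator `xᵢ` of Thompson's group `F`. -/
def x (i : ℕ) : ThompsonF := PresentedGroup.of i

/-- Relators of the Brown–Thompson group `F₃`: `y_q·y_p·y_{q+2}⁻¹·y_p⁻¹` for `p < q`. -/
def brownRels : Set (FreeGroup ℕ) :=
  {r | ∃ q p : ℕ, p < q ∧
    r = FreeGroup.of q * FreeGroup.of p * (FreeGroup.of (q + 2))⁻¹ * (FreeGroup.of p)⁻¹}

/-- The Brown–Thompson group `F₃` as a presented group. -/
abbrev BrownF3 : Type := PresentedGroup brownRels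

/-- The generator `yᵢ` of the Brown–Thompson group `F₃`. -/
def y (i : ℕ) : BrownF3 := PresentedGroup.of i

lemma x_rel {k n : ℕ} (h : k < n) : x n * x k = x k * x (n + 1) := by
  have hmem : FreeGroup.of n * FreeGroup.of k * (FreeGroup.of (n + 1))⁻¹ *
      (FreeGroup.of k)⁻¹ ∈ thompsonRels := ⟨n, k, h, rfl⟩
  have h1 : PresentedGroup.mk thompsonRels
      (FreeGroup.of n * FreeGroup.of k * (FreeGroup.of (n + 1))⁻¹ * (FreeGroup.of k)⁻¹) = 1 := by
    have := Subgroup.subset_normalClosure hmem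
    exact (QuotientGroup.eq_one_iff _).2 this
  have : x n * x k * (x (n + 1))⁻¹ * (x k)⁻¹ = 1 := by
    simpa [x, PresentedGroup.of, map_mul, map_inv] using h1
  calc x n * x k = (x n * x k * (x (n + 1))⁻¹ * (x k)⁻¹) * (x k * x (n + 1)) := by group
    _ = x k * x (n + 1) := by rw [this]; group

/-- There exists a group homomorphism `α : F₃ → F` with `α(yₙ) = xₙ·xₙ₊₁` for all `n`. -/
theorem exists_alpha_homomorphism :
    ∃ α : BrownF3 →* ThompsonF, ∀ n : ℕ, α (y n) = x n * x (n + 1) := by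
  have h : ∀ r ∈ brownRels, FreeGroup.lift (fun n => x n * x (n + 1)) r = 1 := by
    rintro r ⟨q, p, hpq, rfl⟩
    simp only [map_mul, map_inv, FreeGroup.lift_apply_of]
    have key : x q * x (q + 1) * (x p * x (p + 1)) =
        x p * x (p + 1) * (x (q + 2) * x (q + 2 + 1)) := by
      have h1 : x (q + 1) * x p = x p * x (q + 2) := x_rel (by omega)
      have h2 : x q * x p = x p * x (q + 1) := x_rel hpq
      have h3 : x (q + 1) * x (p + 1) = x (p + 1) * x (q + 2) := x_rel (by omega)
      have h4 : x (q + 2) * x (p + 1) = x (p + 1) * x (q + 3) := x_rel (by omega)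
      calc x q * x (q + 1) * (x p * x (p + 1))
          = x q * (x (q + 1) * x p) * x (p + 1) := by group
        _ = x q * (x p * x (q + 2)) * x (p + 1) := by rw [h1]
        _ = (x q * x p) * (x (q + 2) * x (p + 1)) := by group
        _ = (x p * x (q + 1)) * (x (p + 1) * x (q + 3)) := by rw [h2, h4]
        _ = x p * (x (q + 1) * x (p + 1)) * x (q + 3) := by group
        _ = x p * (x (p + 1) * x (q + 2)) * x (q + 3) := by rw [h3]
        _ = x p * x (p + 1) * (x (q + 2) * x (q + 2 + 1)) := by group
    rw [mul_assoc, mul_assoc, ← mul_assoc (x q * x (q + 1)), key]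
    group
  refine ⟨PresentedGroup.toGroup h, fun n => ?_⟩
  exact PresentedGroup.toGroup.of h
end

section
/- The group homomorphism α : F₃ → F determined by α(yₙ) = xₙ·xₙ₊₁ for all n ∈ ℕ is injective; consequently F₃ is isomorphic to its image α(F₃) ≤ F (the oriented Thompson group 𝐹⃗). -/
noncomputable section AlphaAux

/-! ### A concrete representation of `ThompsonF` by PL homeomorphisms of `ℝ` -/

/-- The PL map: identity below `n`, slope 2 on `[n,n+1]`, translation by 1 above `n+1`. -/
def ffn (n : ℕ) (t : ℝ) : ℝ := if t ≤ n then t else if t ≤ n + 1 then 2*t - n else t + 1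

/-- The inverse of `ffn n`. -/
def fgn (n : ℕ) (t : ℝ) : ℝ := if t ≤ n then t else if t ≤ n + 2 then (t + n)/2 else t - 1

lemma ffn_left (n : ℕ) : Function.LeftInverse (fgn n) (ffn n) := by
  intro t; unfold ffn fgn; split_ifs <;> linarith

lemma ffn_right (n : ℕ) : Function.RightInverse (fgn n) (ffn n) := by
  intro t; unfold ffn fgn; split_ifs <;> linarith

/-- `ffn n` as a permutation of `ℝ`. -/
def Fp (n : ℕ) : Equiv.Perm ℝ := ⟨ffn n, fgn n, ffn_left n, ffn_right n⟩

lemma Fp_apply (n : ℕ) (t : ℝ) : Fp n t = ffn n t := rfl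

lemma ffn_le (n : ℕ) (t : ℝ) : t ≤ ffn n t := by
  unfold ffn; split_ifs <;> linarith

lemma ffn_lt (n : ℕ) {t : ℝ} (h : (n:ℝ) < t) : t < ffn n t := by
  unfold ffn; split_ifs <;> linarith

lemma ffn_fix (n : ℕ) {t : ℝ} (h : t ≤ n) : ffn n t = t := by
  unfold ffn; split_ifs <;> linarith

lemma frel {k n : ℕ} (h : k < n) (t : ℝ) : ffn (n+1) (ffn k t) = ffn k (ffn n t) := by
  have h' : (k:ℝ) + 1 ≤ n := by exact_mod_cast Nat.succ_le_of_lt h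
  unfold ffn; push_cast; split_ifs <;> linarith

lemma Fp_rel {k n : ℕ} (h : k < n) : Fp (n+1) * Fp k = Fp k * Fp n := by
  ext t
  simp only [Equiv.Perm.mul_apply, Fp_apply]
  exact frel h t

/-- The representation of Thompson's group `F` on `ℝ`: `x n ↦ (Fp n)⁻¹`. -/
def rho : ThompsonF →* Equiv.Perm ℝ :=
  PresentedGroup.toGroup (f := fun n => (Fp n)⁻¹) (by
    rintro r ⟨n, k, hkn, rfl⟩
    simp only [map_mul, map_inv, FreeGroup.lift_apply_of]
    have hrel := Fp_rel hkn
    rw [inv_inv]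
    have : Fp k * Fp n = Fp (n+1) * Fp k := (Fp_rel hkn).symm
    calc (Fp n)⁻¹ * (Fp k)⁻¹ * (Fp (n+1))⁻¹⁻¹ * (Fp k)⁻¹⁻¹
        = (Fp n)⁻¹ * (Fp k)⁻¹ * (Fp (n+1) * Fp k) := by rw [inv_inv, inv_inv]; group
      _ = (Fp n)⁻¹ * (Fp k)⁻¹ * (Fp k * Fp n) := by rw [hrel]
      _ = 1 := by group)

lemma rho_x (n : ℕ) : rho (x n) = (Fp n)⁻¹ :=
  PresentedGroup.toGroup.of _

/-! ### Dynamics of the images of the `y n` -/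

/-- `Bp p` is the PL map corresponding to `(α (y p))⁻¹` under `rho`. -/
def Bp (p : ℕ) : Equiv.Perm ℝ := Fp (p+1) * Fp p

lemma Bp_fix (p : ℕ) {t : ℝ} (h : t ≤ p) : Bp p t = t := by
  have h1 : Bp p t = ffn (p+1) (ffn p t) := rfl
  rw [h1, ffn_fix p h, ffn_fix (p+1) (by push_cast; linarith)]

lemma Bp_le (p : ℕ) (t : ℝ) : t ≤ Bp p t := by
  have h1 : Bp p t = ffn (p+1) (ffn p t) := rfl
  rw [h1]
  exact le_trans (ffn_le p t) (ffn_le (p+1) _)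

lemma Bp_lt (p : ℕ) {t : ℝ} (h : (p:ℝ) < t) : t < Bp p t := by
  have h1 : Bp p t = ffn (p+1) (ffn p t) := rfl
  rw [h1]
  exact lt_of_lt_of_le (ffn_lt p h) (ffn_le (p+1) _)

/-- Composite of the `Bp`: `Psi (p :: l) = Psi l * Bp p` (apply `Bp p` first). -/
def Psi : List ℕ → Equiv.Perm ℝ
  | [] => 1
  | p :: l => Psi l * Bp p

lemma Psi_le : ∀ (l : List ℕ) (t : ℝ), t ≤ Psi l t
  | [], t => le_rfl
  | p :: l, t => by
    have : Psi (p :: l) t = Psi l (Bp p t) := rfl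
    rw [this]
    exact le_trans (Bp_le p t) (Psi_le l _)

lemma Psi_fix : ∀ (l : List ℕ) (t : ℝ), (∀ m ∈ l, t ≤ (m:ℝ)) → Psi l t = t
  | [], t, _ => rfl
  | p :: l, t, h => by
    have h0 : Psi (p :: l) t = Psi l (Bp p t) := rfl
    rw [h0, Bp_fix p (h p (List.mem_cons_self))]
    exact Psi_fix l t (fun m hm => h m (List.mem_cons_of_mem p hm))

lemma Psi_gt (p : ℕ) (l : List ℕ) {t : ℝ} (h : (p:ℝ) < t) : t < Psi (p :: l) t := by
  have h0 : Psi (p :: l) t = Psi l (Bp p t) := rfl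
  rw [h0]
  exact lt_of_lt_of_le (Bp_lt p h) (Psi_le l _)

/-- Sorted lists with equal `Psi`-images coincide. -/
lemma Psi_inj : ∀ (a : List ℕ), a.Pairwise (· ≤ ·) → ∀ (b : List ℕ), b.Pairwise (· ≤ ·) →
    Psi a = Psi b → a = b
  | [], _, [], _, _ => rfl
  | [], _, q :: b, _, h => by
    exfalso
    have h1 : ((q:ℝ)+1) < Psi (q :: b) ((q:ℝ)+1) := Psi_gt q b (by linarith)
    have h2 : Psi [] ((q:ℝ)+1) = (q:ℝ)+1 := rfl
    rw [← h, h2] at h1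
    exact lt_irrefl _ h1
  | p :: a, _, [], _, h => by
    exfalso
    have h1 : ((p:ℝ)+1) < Psi (p :: a) ((p:ℝ)+1) := Psi_gt p a (by linarith)
    have h2 : Psi [] ((p:ℝ)+1) = (p:ℝ)+1 := rfl
    rw [h, h2] at h1
    exact lt_irrefl _ h1
  | p :: a, ha, q :: b, hb, h => by
    have hpq : p = q := by
      by_contra hne
      rcases Nat.lt_or_ge p q with hlt | hge
      · -- evaluate at q : Psi (p::a) q > q, Psi (q::b) q = q
        have h1 : (q:ℝ) < Psi (p :: a) (q:ℝ) := Psi_gt p a (by exact_mod_cast hlt)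
        have h2 : Psi (q :: b) (q:ℝ) = q := by
          apply Psi_fix
          intro m hm
          rcases List.mem_cons.mp hm with rfl | hm'
          · exact le_rfl
          · exact_mod_cast (List.pairwise_cons.mp hb).1 m hm'
        rw [h, h2] at h1
        exact lt_irrefl _ h1
      · have hlt : q < p := lt_of_le_of_ne hge (fun e => hne e.symm)
        have h1 : (p:ℝ) < Psi (q :: b) (p:ℝ) := Psi_gt q b (by exact_mod_cast hlt)
        have h2 : Psi (p :: a) (p:ℝ) = p := by
          apply Psi_fix
          intro m hm
          rcases List.mem_cons.mp hm with rfl | hm'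
          · exact le_rfl
          · exact_mod_cast (List.pairwise_cons.mp ha).1 m hm'
        rw [← h, h2] at h1
        exact lt_irrefl _ h1
    subst hpq
    have hcancel : Psi a = Psi b := by
      have h1 : Psi a * Bp p = Psi b * Bp p := h
      exact mul_right_cancel h1
    rw [Psi_inj a (List.pairwise_cons.mp ha).2 b (List.pairwise_cons.mp hb).2 hcancel]

/-! ### Algebra in `BrownF3`: normal-ish forms -/

/-- The product `y l₁ * y l₂ * ⋯`. -/
def prodY (l : List ℕ) : BrownF3 := (l.map y).prod

@[simp] lemma prodY_nil : prodY [] = 1 := rfl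

lemma prodY_cons (p : ℕ) (l : List ℕ) : prodY (p :: l) = y p * prodY l := by
  simp [prodY]

lemma prodY_append (l₁ l₂ : List ℕ) : prodY (l₁ ++ l₂) = prodY l₁ * prodY l₂ := by
  simp [prodY]

/-- The defining relation of `BrownF3`. -/
lemma yrel {p q : ℕ} (h : p < q) : y q * y p = y p * y (q + 2) := by
  have hmem : FreeGroup.of q * FreeGroup.of p * (FreeGroup.of (q + 2))⁻¹ * (FreeGroup.of p)⁻¹ ∈
      Subgroup.normalClosure brownRels :=
    Subgroup.subset_normalClosure ⟨q, p, h, rfl⟩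
  have h1 : PresentedGroup.mk brownRels
      (FreeGroup.of q * FreeGroup.of p * (FreeGroup.of (q + 2))⁻¹ * (FreeGroup.of p)⁻¹) = 1 :=
    (QuotientGroup.eq_one_iff _).mpr hmem
  simp only [map_mul, map_inv] at h1
  have h2 : y q * y p * (y (q + 2))⁻¹ * (y p)⁻¹ = 1 := h1
  have h3 := mul_inv_eq_one.mp h2
  exact mul_inv_eq_iff_eq_mul.mp h3

lemma yswap_lt {p q : ℕ} (h : p < q) : (y p)⁻¹ * y q = y (q + 2) * (y p)⁻¹ := by
  have := yrel h
  rw [eq_comm, mul_inv_eq_iff_eq_mul, mul_assoc, ← inv_mul_eq_iff_eq_mul]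
  exact this.symm

lemma yswap_gt {p q : ℕ} (h : q < p) : (y p)⁻¹ * y q = y q * (y (p + 2))⁻¹ := by
  have h1 : y p * y q = y q * y (p + 2) := yrel h
  rw [inv_mul_eq_iff_eq_mul, ← mul_assoc, h1, mul_assoc, mul_inv_cancel, mul_one]

/-- Moving a single generator through an inverse positive word. -/
lemma inv_mul_letter : ∀ (v : List ℕ) (q : ℕ),
    (∃ c v', (prodY v)⁻¹ * y q = y c * (prodY v')⁻¹) ∨
    (∃ v', (prodY v)⁻¹ * y q = (prodY v')⁻¹)
  | [], q => Or.inl ⟨q, [], by simp⟩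
  | p :: v₀, q => by
    have h0 : (prodY (p :: v₀))⁻¹ = (prodY v₀)⁻¹ * (y p)⁻¹ := by
      rw [prodY_cons, mul_inv_rev]
    rcases lt_trichotomy p q with hlt | heq | hgt
    · -- (y p)⁻¹ y q = y (q+2) (y p)⁻¹
      rcases inv_mul_letter v₀ (q+2) with ⟨c, v', hv'⟩ | ⟨v', hv'⟩
      · refine Or.inl ⟨c, p :: v', ?_⟩
        rw [h0, mul_assoc, yswap_lt hlt, ← mul_assoc, hv', prodY_cons, mul_inv_rev, mul_assoc]
      · refine Or.inr ⟨p :: v', ?_⟩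
        rw [h0, mul_assoc, yswap_lt hlt, ← mul_assoc, hv', prodY_cons, mul_inv_rev]
    · subst heq
      exact Or.inr ⟨v₀, by rw [h0, mul_assoc, inv_mul_cancel, mul_one]⟩
    · rcases inv_mul_letter v₀ q with ⟨c, v', hv'⟩ | ⟨v', hv'⟩
      · refine Or.inl ⟨c, (p+2) :: v', ?_⟩
        rw [h0, mul_assoc, yswap_gt hgt, ← mul_assoc, hv', prodY_cons, mul_inv_rev, mul_assoc]
      · refine Or.inr ⟨(p+2) :: v', ?_⟩
        rw [h0, mul_assoc, yswap_gt hgt, ← mul_assoc, hv', prodY_cons, mul_inv_rev]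

/-- Moving a positive word through an inverse positive word. -/
lemma inv_mul_word : ∀ (u v : List ℕ),
    ∃ u' v', (prodY v)⁻¹ * prodY u = prodY u' * (prodY v')⁻¹
  | [], v => ⟨[], v, by simp⟩
  | q :: u₀, v => by
    rcases inv_mul_letter v q with ⟨c, v₁, hv₁⟩ | ⟨v₁, hv₁⟩
    · obtain ⟨u', v', h⟩ := inv_mul_word u₀ v₁
      refine ⟨c :: u', v', ?_⟩
      rw [prodY_cons, ← mul_assoc, hv₁, mul_assoc, h, prodY_cons, mul_assoc]
    · obtain ⟨u', v', h⟩ := inv_mul_word u₀ v₁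
      refine ⟨u', v', ?_⟩
      rw [prodY_cons, ← mul_assoc, hv₁, h]

/-- Every element of `BrownF3` has the form `P·N⁻¹` with `P`, `N` positive words. -/
lemma exists_PN (z : BrownF3) : ∃ u v, z = prodY u * (prodY v)⁻¹ := by
  obtain ⟨w, rfl⟩ := PresentedGroup.mk_surjective brownRels z
  induction w using FreeGroup.induction_on with
  | C1 => exact ⟨[], [], by simp⟩
  | of i =>
      refine ⟨[i], [], ?_⟩
      have hpure : (pure i : FreeGroup ℕ) = FreeGroup.of i := rfl
      simp [hpure, prodY, y, PresentedGroup.of]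
  | inv_of i _ =>
      refine ⟨[], [i], ?_⟩
      have hpure : (pure i : FreeGroup ℕ) = FreeGroup.of i := rfl
      rw [map_inv]
      simp [hpure, prodY, y, PresentedGroup.of]
  | mul w₁ w₂ h₁ h₂ =>
      obtain ⟨a, b, hab⟩ := h₁
      obtain ⟨c, d, hcd⟩ := h₂
      obtain ⟨u', v', h⟩ := inv_mul_word c b
      refine ⟨a ++ u', d ++ v', ?_⟩
      rw [map_mul, hab, hcd, prodY_append, prodY_append, mul_inv_rev]
      rw [mul_assoc, ← mul_assoc (prodY b)⁻¹, h]
      group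

/-- Inserting a generator on the left of a sorted positive word. -/
lemma insert_sorted : ∀ (v : List ℕ), v.Pairwise (· ≤ ·) → ∀ p : ℕ,
    ∃ v', v'.Pairwise (· ≤ ·) ∧ prodY v' = y p * prodY v ∧
      ∀ b : ℕ, b ≤ p → (∀ m ∈ v, b ≤ m) → ∀ m ∈ v', b ≤ m
  | [], _, p => ⟨[p], by simp, by simp [prodY], by intro b hb _ m hm; simp at hm; omega⟩
  | q :: v₀, hs, p => by
    rcases le_or_gt p q with hle | hgt
    · refine ⟨p :: q :: v₀, ?_, rfl, ?_⟩
      · rw [List.pairwise_cons]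
        refine ⟨?_, hs⟩
        intro m hm
        rcases List.mem_cons.mp hm with rfl | hm'
        · exact hle
        · exact le_trans hle ((List.pairwise_cons.mp hs).1 m hm')
      · intro b hb _ m hm
        rcases List.mem_cons.mp hm with rfl | hm'
        · exact hb
        · rcases List.mem_cons.mp hm' with rfl | hm''
          · exact le_trans hb hle
          · exact le_trans (le_trans hb hle) ((List.pairwise_cons.mp hs).1 m hm'')
    · obtain ⟨v₀', hsort, hprod, hmin⟩ := insert_sorted v₀ (List.pairwise_cons.mp hs).2 (p+2)
      refine ⟨q :: v₀', ?_, ?_, ?_⟩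
      · rw [List.pairwise_cons]
        refine ⟨?_, hsort⟩
        intro m hm
        exact hmin q (by omega) (fun m' hm' => (List.pairwise_cons.mp hs).1 m' hm') m hm
      · rw [prodY_cons, hprod, prodY_cons, ← mul_assoc, ← mul_assoc, yrel hgt]
      · intro b hb hv m hm
        rcases List.mem_cons.mp hm with rfl | hm'
        · exact hv m (List.mem_cons_self)
        · exact hmin b (by omega)
            (fun m' hm' => hv m' (List.mem_cons_of_mem _ hm')) m hm'

/-- Every positive word can be sorted. -/
lemma sort_word : ∀ u : List ℕ, ∃ u', u'.Pairwise (· ≤ ·) ∧ prodY u' = prodY u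
  | [] => ⟨[], by simp, rfl⟩
  | p :: u₀ => by
    obtain ⟨v, hv, hvp⟩ := sort_word u₀
    obtain ⟨v', hs, hp, _⟩ := insert_sorted v hv p
    exact ⟨v', hs, by rw [hp, hvp, prodY_cons]⟩

end AlphaAux

/-- The homomorphism `α : F₃ → F` determined by `α(yₙ) = xₙ·xₙ₊₁` is injective;
consequently `F₃` is isomorphic to its image `α(F₃) ≤ F` (the oriented Thompson group). -/
theorem alpha_injective (α : BrownF3 →* ThompsonF)
    (hα : ∀ n : ℕ, α (y n) = x n * x (n + 1)) :
    Function.Injective α ∧ Nonempty (BrownF3 ≃* α.range) := by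
  have hra : ∀ l : List ℕ, rho (α (prodY l)) = (Psi l)⁻¹ := by
    intro l
    induction l with
    | nil => simp [prodY, Psi]
    | cons p l ih =>
        rw [prodY_cons, map_mul, map_mul, ih, hα, map_mul, rho_x, rho_x]
        have : Psi (p :: l) = Psi l * Bp p := rfl
        rw [this, Bp]
        rw [mul_inv_rev, mul_inv_rev, mul_assoc]
  have key : ∀ z : BrownF3, α z = 1 → z = 1 := by
    intro z hz
    obtain ⟨u, v, rfl⟩ := exists_PN z
    obtain ⟨a, hasort, hpa⟩ := sort_word u
    obtain ⟨b, hbsort, hpb⟩ := sort_word v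
    rw [← hpa, ← hpb] at hz ⊢
    have h1 : α (prodY a) = α (prodY b) := by
      rw [map_mul, map_inv] at hz
      exact mul_inv_eq_one.mp hz
    have h2 : (Psi a)⁻¹ = (Psi b)⁻¹ := by
      rw [← hra a, ← hra b, h1]
    have h3 : Psi a = Psi b := inv_injective h2
    rw [Psi_inj a hasort b hbsort h3]
    simp
  have hinj : Function.Injective α := (injective_iff_map_eq_one α).mpr key
  exact ⟨hinj, ⟨MonoidHom.ofInjective hinj⟩⟩
end

section
/- An element g of Thompson's group F lies in both the range of α and the positive monoid F₊ if and only if g = α(h) for some h in the positive monoid F₃,₊; equivalently, α(F₃) ∩ F₊ = α(F₃,₊). -/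
namespace ThGrpAux

def insL (l : List ℕ) (a : ℕ) : List ℕ :=
  l.filter (fun b => b ≤ a) ++ a :: (l.filter (fun b => ¬ b ≤ a)).map (· + 1)

-- filter computations
theorem f1 (l : List ℕ) {n k : ℕ} (h : k < n) :
    (insL l n).filter (fun b => b ≤ k) = l.filter (fun b => b ≤ k) := by
  unfold insL
  rw [List.filter_append, List.filter_filter, List.filter_cons, List.filter_map]
  have e1 : ∀ b ∈ l, (decide (b ≤ k) && decide (b ≤ n)) = decide (b ≤ k) := by
    intro b _; by_cases hb : b ≤ k <;> simp [hb]; omega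
  rw [List.filter_congr e1]
  have e2 : List.filter ((fun b => decide (b ≤ k)) ∘ (· + 1)) (l.filter fun b => ¬ b ≤ n) = [] := by
    rw [List.filter_eq_nil_iff]
    intro a ha
    simp only [List.mem_filter, decide_eq_true_eq] at ha ⊢
    simp only [Function.comp_apply, decide_eq_true_eq]
    omega
  rw [e2]
  simp only [List.map_nil]
  have : ¬ (n ≤ k) := by omega
  simp [this]

theorem f2 (l : List ℕ) {n k : ℕ} (h : k < n) :
    (insL l n).filter (fun b => ¬ b ≤ k) =
      l.filter (fun b => decide (k < b) && decide (b ≤ n)) ++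
        n :: (l.filter (fun b => ¬ b ≤ n)).map (· + 1) := by
  unfold insL
  rw [List.filter_append, List.filter_filter, List.filter_cons, List.filter_map]
  congr 1
  · apply List.filter_congr
    intro b _
    by_cases hb : b ≤ k <;> by_cases hb' : b ≤ n <;> simp [hb, hb'] <;> omega
  · have : (decide ¬ (n ≤ k)) = true := by simp; omega
    rw [if_pos this]
    congr 1
    rw [List.filter_eq_self.2]
    intro a ha
    simp only [List.mem_filter, decide_eq_true_eq] at ha
    simp only [Function.comp_apply, decide_eq_true_eq]
    omega

theorem f3 (l : List ℕ) {n k : ℕ} (h : k ≤ n) :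
    (insL l k).filter (fun b => b ≤ n + 1) =
      l.filter (fun b => b ≤ k) ++
        k :: (l.filter (fun b => decide (k < b) && decide (b ≤ n))).map (· + 1) := by
  unfold insL
  rw [List.filter_append, List.filter_filter, List.filter_cons, List.filter_map]
  congr 1
  · apply List.filter_congr
    intro b _
    by_cases hb : b ≤ k <;> simp [hb]; omega
  · have : (decide (k ≤ n + 1)) = true := by simp; omega
    rw [if_pos this]
    congr 1
    rw [List.filter_filter]
    congr 1
    apply List.filter_congr
    intro b _
    by_cases hb : b ≤ k <;> by_cases hb' : b ≤ n <;>
      simp [hb, hb', Function.comp] <;> omega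

theorem f4 (l : List ℕ) {n k : ℕ} (h : k ≤ n) :
    (insL l k).filter (fun b => ¬ b ≤ n + 1) =
      (l.filter (fun b => ¬ b ≤ n)).map (· + 1) := by
  unfold insL
  rw [List.filter_append, List.filter_filter, List.filter_cons, List.filter_map]
  have e1 : List.filter (fun a => decide ¬a ≤ n + 1 && decide (a ≤ k)) l = [] := by
    rw [List.filter_eq_nil_iff]; intro a _; simp; omega
  have e2 : (decide ¬ (k ≤ n+1)) = false := by simp; omega
  rw [e1, e2, if_neg (by simp)]
  simp only [List.filter_filter, List.nil_append]
  congr 1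
  apply List.filter_congr
  intro b _
  by_cases hb : b ≤ n <;> simp [hb, Function.comp] <;> omega

theorem insL_insL (l : List ℕ) {n k : ℕ} (h : k < n) :
    insL (insL l n) k = insL (insL l k) (n + 1) := by
  conv_lhs => rw [insL, f1 l h, f2 l h]
  conv_rhs => rw [insL, f3 l h.le, f4 l h.le]
  simp [List.map_append, List.map_map]

def nfL (w : List ℕ) : List ℕ := w.foldl insL []

inductive Step : List ℕ → List ℕ → Prop
  | mk (w₁ w₂ : List ℕ) (n k : ℕ) (h : k < n) :
      Step (w₁ ++ n :: k :: w₂) (w₁ ++ k :: (n + 1) :: w₂)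

def Mv : List ℕ → List ℕ → Prop := Relation.EqvGen Step

theorem Mv.refl (u : List ℕ) : Mv u u := Relation.EqvGen.refl u
theorem Mv.symm {u v} (h : Mv u v) : Mv v u := Relation.EqvGen.symm _ _ h
theorem Mv.trans {u v w} (h : Mv u v) (h' : Mv v w) : Mv u w := Relation.EqvGen.trans _ _ _ h h'
theorem Step.mv {u v} (h : Step u v) : Mv u v := Relation.EqvGen.rel _ _ h

theorem Step.append_left {u v} (w : List ℕ) (h : Step u v) : Step (w ++ u) (w ++ v) := by
  rcases h with ⟨w₁, w₂, n, k, hkn⟩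
  rw [← List.append_assoc, ← List.append_assoc]
  exact Step.mk (w ++ w₁) w₂ n k hkn

theorem Step.append_right {u v} (w : List ℕ) (h : Step u v) : Step (u ++ w) (v ++ w) := by
  rcases h with ⟨w₁, w₂, n, k, hkn⟩
  rw [List.append_assoc, List.append_assoc]
  exact Step.mk w₁ (w₂ ++ w) n k hkn

theorem Mv.append_left {u v} (w : List ℕ) (h : Mv u v) : Mv (w ++ u) (w ++ v) := by
  induction h with
  | rel a b h => exact (h.append_left w).mv
  | refl a => exact Mv.refl _
  | symm a b _ ih => exact ih.symm
  | trans a b c _ _ ih1 ih2 => exact ih1.trans ih2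

theorem Mv.append_right {u v} (w : List ℕ) (h : Mv u v) : Mv (u ++ w) (v ++ w) := by
  induction h with
  | rel a b h => exact (h.append_right w).mv
  | refl a => exact Mv.refl _
  | symm a b _ ih => exact ih.symm
  | trans a b c _ _ ih1 ih2 => exact ih1.trans ih2

theorem Mv.cons (a : ℕ) {u v} (h : Mv u v) : Mv (a :: u) (a :: v) := h.append_left [a]

theorem Mv.append {u v u' v'} (h : Mv u v) (h' : Mv u' v') : Mv (u ++ u') (v ++ v') :=
  (h.append_right u').trans (h'.append_left v)

theorem nfL_append (u v : List ℕ) : nfL (u ++ v) = v.foldl insL (nfL u) :=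
  List.foldl_append ..

theorem nfL_concat (u : List ℕ) (a : ℕ) : nfL (u ++ [a]) = insL (nfL u) a := by
  rw [nfL_append]; rfl

theorem foldl_step {u v} (h : Step u v) (m : List ℕ) : u.foldl insL m = v.foldl insL m := by
  rcases h with ⟨w₁, w₂, n, k, hkn⟩
  rw [show (n : ℕ) :: k :: w₂ = [n, k] ++ w₂ by rfl, show (k : ℕ) :: (n+1) :: w₂ = [k, n+1] ++ w₂ by rfl]
  rw [← List.append_assoc, ← List.append_assoc, List.foldl_append, List.foldl_append,
    List.foldl_append, List.foldl_append]
  congr 1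
  simpa using insL_insL (List.foldl insL m w₁) hkn

theorem Mv.foldl_eq {u v} (h : Mv u v) (m : List ℕ) : u.foldl insL m = v.foldl insL m := by
  induction h with
  | rel a b h => exact foldl_step h m
  | refl a => rfl
  | symm a b _ ih => exact ih.symm
  | trans a b c _ _ ih1 ih2 => exact ih1.trans ih2

theorem Mv.nfL_eq {u v} (h : Mv u v) : nfL u = nfL v := h.foldl_eq []

/-- sortedness facts -/
theorem insL_sorted {l : List ℕ} (h : l.Pairwise (· ≤ ·)) (a : ℕ) : (insL l a).Pairwise (· ≤ ·) := by
  unfold insL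
  rw [List.pairwise_append]
  refine ⟨h.filter _, ?_, ?_⟩
  · rw [List.pairwise_cons]
    constructor
    · intro b hb
      simp only [List.mem_map, List.mem_filter, decide_eq_true_eq] at hb
      obtain ⟨c, ⟨_, hc⟩, rfl⟩ := hb
      omega
    · refine List.Pairwise.map _ (fun hbc => by omega) (h.filter _)
  · intro b hb c hc
    simp only [List.mem_filter, decide_eq_true_eq] at hb
    simp only [List.mem_cons, List.mem_map, List.mem_filter, decide_eq_true_eq] at hc
    rcases hc with rfl | ⟨d, ⟨_, hd⟩, rfl⟩ <;> omega

theorem nfL_sorted (w : List ℕ) : (nfL w).Pairwise (· ≤ ·) := by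
  suffices H : ∀ (m : List ℕ), m.Pairwise (· ≤ ·) → (w.foldl insL m).Pairwise (· ≤ ·) from
    H [] (List.Pairwise.nil)
  induction w with
  | nil => exact fun m hm => hm
  | cons a w ih => exact fun m hm => ih _ (insL_sorted hm a)

theorem insL_of_forall_le {l : List ℕ} {a : ℕ} (h : ∀ b ∈ l, b ≤ a) : insL l a = l ++ [a] := by
  unfold insL
  rw [List.filter_eq_self.2 (fun b hb => by simpa using h b hb),
    List.filter_eq_nil_iff.2 (fun b hb => by simpa using h b hb)]
  rfl

theorem nfL_of_sorted {l : List ℕ} (h : l.Pairwise (· ≤ ·)) : nfL l = l := by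
  induction l using List.reverseRecOn with
  | nil => rfl
  | append_singleton l a ih =>
    have hl : l.Pairwise (· ≤ ·) := h.sublist (List.sublist_append_left _ _)
    rw [nfL_concat, ih hl, insL_of_forall_le]
    intro b hb
    rcases List.pairwise_append.1 (by simpa using h) with ⟨-, -, hba⟩
    exact hba b hb a (List.mem_singleton_self a)

theorem insL_concat_gt (l : List ℕ) {a b : ℕ} (h : a < b) :
    insL (l ++ [b]) a = insL l a ++ [b + 1] := by
  unfold insL
  rw [List.filter_append, List.filter_append, List.map_append]
  have h1 : List.filter (fun x => decide (x ≤ a)) [b] = [] := by simp; omega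
  have h2 : List.filter (fun x => decide ¬(x ≤ a)) [b] = [b] := by simp; omega
  rw [h1, h2]
  simp

theorem mv_concat_insL {l : List ℕ} (h : l.Pairwise (· ≤ ·)) (a : ℕ) :
    Mv (l ++ [a]) (insL l a) := by
  induction l using List.reverseRecOn with
  | nil => simpa [insL] using Mv.refl [a]
  | append_singleton l b ih =>
    have hl : l.Pairwise (· ≤ ·) := h.sublist (List.sublist_append_left _ _)
    by_cases hba : b ≤ a
    · rw [insL_of_forall_le]
      · exact Mv.refl _
      · intro c hc
        rcases List.mem_append.1 hc with hc | hc
        · rcases List.pairwise_append.1 (by simpa using h) with ⟨-, -, hbd⟩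
          exact le_trans (hbd c hc b (List.mem_singleton_self b)) hba
        · simp only [List.mem_singleton] at hc; omega
    · have hab : a < b := by omega
      rw [insL_concat_gt l hab]
      have step1 : Step (l ++ [b] ++ [a]) (l ++ [a] ++ [b + 1]) := by
        have := Step.mk l [] b a hab
        simpa using this
      exact step1.mv.trans ((ih hl).append_right [b + 1])

theorem mv_nfL (w : List ℕ) : Mv w (nfL w) := by
  induction w using List.reverseRecOn with
  | nil => exact Mv.refl []
  | append_singleton w a ih =>
    rw [nfL_concat]
    exact (ih.append_right [a]).trans (mv_concat_insL (nfL_sorted w) a)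

theorem mv_iff_nfL_eq {u v : List ℕ} : Mv u v ↔ nfL u = nfL v := by
  constructor
  · exact Mv.nfL_eq
  · intro h
    have h1 := mv_nfL u
    rw [h] at h1
    exact h1.trans (mv_nfL v).symm

/-- sorted split -/
theorem sorted_split {l : List ℕ} (h : l.Pairwise (· ≤ ·)) (a : ℕ) :
    l = l.filter (fun b => b ≤ a) ++ l.filter (fun b => ¬ b ≤ a) := by
  induction l with
  | nil => rfl
  | cons b t ih =>
    have ht : t.Pairwise (· ≤ ·) := h.of_cons
    by_cases hba : b ≤ a
    · rw [List.filter_cons, List.filter_cons, if_pos (by simpa using hba),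
        if_neg (by simp [hba]), List.cons_append]
      exact congrArg (b :: ·) (ih ht)
    · have hall : ∀ c ∈ b :: t, ¬ c ≤ a := by
        intro c hc
        rcases List.mem_cons.1 hc with rfl | hc
        · exact hba
        · have := List.rel_of_pairwise_cons h hc; omega
      rw [List.filter_eq_nil_iff.2 (fun c hc => by simpa using hall c hc),
        List.filter_eq_self.2 (fun c hc => by simpa using hall c hc)]
      rfl

theorem filter_le_insL (l : List ℕ) (a : ℕ) :
    (insL l a).filter (fun b => b ≤ a) = l.filter (fun b => b ≤ a) ++ [a] := by
  unfold insL
  rw [List.filter_append, List.filter_filter, List.filter_cons, List.filter_map]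
  have e1 : List.filter (fun b => decide (b ≤ a) && decide (b ≤ a)) l
      = List.filter (fun b => decide (b ≤ a)) l :=
    List.filter_congr (fun b _ => by by_cases hb : b ≤ a <;> simp [hb])
  have e2 : List.filter ((fun b => decide (b ≤ a)) ∘ (· + 1)) (List.filter (fun b => decide ¬b ≤ a) l)
      = [] := by
    rw [List.filter_eq_nil_iff]
    intro c hc
    simp only [List.mem_filter, decide_eq_true_eq] at hc
    simp only [Function.comp_apply, decide_eq_true_eq]
    omega
  rw [e1, e2, if_pos (by simp)]
  rfl

theorem filter_gt_insL (l : List ℕ) (a : ℕ) :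
    (insL l a).filter (fun b => ¬ b ≤ a) = (l.filter (fun b => ¬ b ≤ a)).map (· + 1) := by
  unfold insL
  rw [List.filter_append, List.filter_filter, List.filter_cons, List.filter_map]
  have e1 : List.filter (fun b => decide ¬b ≤ a && decide (b ≤ a)) l = [] := by
    rw [List.filter_eq_nil_iff]
    intro c _
    simp only [Bool.and_eq_true, decide_eq_true_eq, not_and]
    omega
  have e2 : List.filter ((fun b => decide ¬b ≤ a) ∘ (· + 1)) (List.filter (fun b => decide ¬b ≤ a) l)
      = List.filter (fun b => decide ¬b ≤ a) l := by
    rw [List.filter_eq_self]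
    intro c hc
    simp only [List.mem_filter, decide_eq_true_eq] at hc
    simp only [Function.comp_apply, decide_eq_true_eq]
    omega
  rw [e1, e2, if_neg (by simp)]
  rfl

theorem insL_inj {l l' : List ℕ} (hl : l.Pairwise (· ≤ ·)) (hl' : l'.Pairwise (· ≤ ·)) (a : ℕ)
    (h : insL l a = insL l' a) : l = l' := by
  have h1 := congrArg (List.filter (fun b => b ≤ a)) h
  rw [filter_le_insL, filter_le_insL] at h1
  have h1' : l.filter (fun b => b ≤ a) = l'.filter (fun b => b ≤ a) := by
    have := congrArg List.dropLast h1
    simpa [List.dropLast_concat] using this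
  have h2 := congrArg (List.filter (fun b => ¬ b ≤ a)) h
  rw [filter_gt_insL, filter_gt_insL] at h2
  have h2' : l.filter (fun b => ¬ b ≤ a) = l'.filter (fun b => ¬ b ≤ a) := by
    have hinj : Function.Injective (· + 1 : ℕ → ℕ) := add_left_injective 1
    exact List.map_injective_iff.2 hinj h2
  rw [sorted_split hl a, sorted_split hl' a, h1', h2']

theorem nfL_right_cancel {u v : List ℕ} (s : List ℕ)
    (h : nfL (u ++ s) = nfL (v ++ s)) : nfL u = nfL v := by
  induction s generalizing u v with
  | nil => simpa using h
  | cons a s ih =>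
    rw [show u ++ a :: s = (u ++ [a]) ++ s by simp, show v ++ a :: s = (v ++ [a]) ++ s by simp] at h
    have := ih h
    rw [nfL_concat, nfL_concat] at this
    exact insL_inj (nfL_sorted u) (nfL_sorted v) a this

/-- Prepending a letter to a sorted word, in normal form terms. -/
def go : ℕ → List ℕ → List ℕ
  | c, [] => [c]
  | c, b :: t => if b < c then b :: go (c + 1) t else c :: b :: t

theorem go_ne_nil (c : ℕ) (s : List ℕ) : go c s ≠ [] := by
  cases s with
  | nil => simp [go]
  | cons b t => by_cases h : b < c <;> simp [go, h]

theorem mv_cons_go (a : ℕ) (s : List ℕ) : Mv (a :: s) (go a s) := by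
  induction s generalizing a with
  | nil => exact Mv.refl _
  | cons b t ih =>
    by_cases h : b < a
    · rw [go, if_pos h]
      have st : Step ([] ++ a :: b :: t) ([] ++ b :: (a + 1) :: t) := Step.mk [] t a b h
      simp only [List.nil_append] at st
      exact st.mv.trans ((ih (a + 1)).cons b)
    · rw [go, if_neg h]
      exact Mv.refl _

theorem go_lower {s : List ℕ} {e c : ℕ} (hs : ∀ z ∈ s, e ≤ z) (hc : e ≤ c) :
    ∀ z ∈ go c s, e ≤ z := by
  induction s generalizing c with
  | nil => intro z hz; simp [go] at hz; omega
  | cons b t ih =>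
    intro z hz
    by_cases h : b < c
    · rw [go, if_pos h] at hz
      rcases List.mem_cons.1 hz with rfl | hz
      · exact hs z (List.mem_cons_self ..)
      · exact ih (fun w hw => hs w (List.mem_cons_of_mem _ hw)) (by omega) z hz
    · rw [go, if_neg h] at hz
      rcases List.mem_cons.1 hz with rfl | hz
      · exact hc
      · exact hs z hz

theorem go_sorted {s : List ℕ} (hs : s.Pairwise (· ≤ ·)) (a : ℕ) :
    (go a s).Pairwise (· ≤ ·) := by
  induction s generalizing a with
  | nil => simp [go]
  | cons b t ih =>
    have hbt : ∀ z ∈ t, b ≤ z := fun z hz => List.rel_of_pairwise_cons hs hz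
    by_cases h : b < a
    · rw [go, if_pos h]
      rw [List.pairwise_cons]
      exact ⟨go_lower hbt (by omega), ih hs.of_cons (a + 1)⟩
    · rw [go, if_neg h]
      rw [List.pairwise_cons]
      constructor
      · intro z hz
        rcases List.mem_cons.1 hz with rfl | hz
        · omega
        · have := hbt z hz; omega
      · exact hs

theorem nfL_cons (a : ℕ) (w : List ℕ) : nfL (a :: w) = go a (nfL w) := by
  have h1 : Mv (a :: w) (go a (nfL w)) := ((mv_nfL w).cons a).trans (mv_cons_go a (nfL w))
  have := h1.nfL_eq
  rwa [nfL_of_sorted (go_sorted (nfL_sorted w) a)] at this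

theorem go_inj {s t : List ℕ} {a : ℕ} (h : go a s = go a t) : s = t := by
  induction s generalizing a t with
  | nil =>
    cases t with
    | nil => rfl
    | cons b t' =>
      exfalso
      by_cases hb : b < a
      · simp only [go, if_pos hb, List.cons.injEq] at h
        exact go_ne_nil (a + 1) t' h.2.symm
      · simp only [go, if_neg hb, List.cons.injEq] at h
        simp at h
  | cons b s' ih =>
    cases t with
    | nil =>
      exfalso
      by_cases hb : b < a
      · simp only [go, if_pos hb, List.cons.injEq] at h
        exact go_ne_nil (a + 1) s' h.2
      · simp only [go, if_neg hb, List.cons.injEq] at h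
        simp at h
    | cons c t' =>
      by_cases hb : b < a <;> by_cases hc : c < a
      · rw [show go a (b :: s') = b :: go (a+1) s' by simp [go, hb],
          show go a (c :: t') = c :: go (a+1) t' by simp [go, hc]] at h
        obtain ⟨rfl, h2⟩ := List.cons_eq_cons.1 h
        rw [ih h2]
      · rw [show go a (b :: s') = b :: go (a+1) s' by simp [go, hb],
          show go a (c :: t') = a :: c :: t' by simp [go, hc]] at h
        have := (List.cons_eq_cons.1 h).1
        omega
      · rw [show go a (b :: s') = a :: b :: s' by simp [go, hb],
          show go a (c :: t') = c :: go (a+1) t' by simp [go, hc]] at h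
        have := (List.cons_eq_cons.1 h).1
        omega
      · rw [show go a (b :: s') = a :: b :: s' by simp [go, hb],
          show go a (c :: t') = a :: c :: t' by simp [go, hc]] at h
        simpa using h

theorem nfL_left_cancel {u v : List ℕ} (s : List ℕ)
    (h : nfL (s ++ u) = nfL (s ++ v)) : nfL u = nfL v := by
  induction s with
  | nil => simpa using h
  | cons a s ih =>
    simp only [List.cons_append, nfL_cons] at h
    exact ih (go_inj h)

/-- Common right multiples: a generator versus a word. -/
theorem one_crm (v : List ℕ) (i : ℕ) : ∃ c i', Mv (i :: c) (v ++ [i']) := by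
  induction v generalizing i with
  | nil => exact ⟨[], i, Mv.refl _⟩
  | cons p v' ih =>
    rcases Nat.lt_trichotomy i p with hip | rfl | hpi
    · obtain ⟨c₀, i₀, h₀⟩ := ih i
      refine ⟨(p + 1) :: c₀, i₀, ?_⟩
      have st : Step ([] ++ p :: i :: c₀) ([] ++ i :: (p + 1) :: c₀) := Step.mk [] c₀ p i hip
      simp only [List.nil_append] at st
      exact st.mv.symm.trans (h₀.cons p)
    · exact ⟨v' ++ [i], i, Mv.refl _⟩
    · obtain ⟨c₀, i₀, h₀⟩ := ih (i + 1)
      refine ⟨p :: c₀, i₀, ?_⟩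
      have st : Step ([] ++ i :: p :: c₀) ([] ++ p :: (i + 1) :: c₀) := Step.mk [] c₀ i p hpi
      simp only [List.nil_append] at st
      exact st.mv.trans (h₀.cons p)

/-- Common right multiples for positive words. -/
theorem crm (u v : List ℕ) : ∃ c d, Mv (u ++ c) (v ++ d) := by
  induction u generalizing v with
  | nil => exact ⟨v, [], by simpa using Mv.refl v⟩
  | cons i u' ih =>
    obtain ⟨c₀, i₀, h₀⟩ := one_crm v i
    obtain ⟨c', d', h'⟩ := ih c₀
    refine ⟨c', [i₀] ++ d', ?_⟩
    have h1 : Mv (i :: (u' ++ c')) (i :: (c₀ ++ d')) := (h'.cons i)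
    have h2 : Mv ((i :: c₀) ++ d') ((v ++ [i₀]) ++ d') := h₀.append_right d'
    simp only [List.cons_append, List.append_assoc] at h1 h2 ⊢
    exact h1.trans h2

/-- The doubling map `yⱼ ↦ xⱼxⱼ₊₁`. -/
def Aw : List ℕ → List ℕ
  | [] => []
  | j :: u => j :: (j + 1) :: Aw u

theorem Aw_append (u v : List ℕ) : Aw (u ++ v) = Aw u ++ Aw v := by
  induction u with
  | nil => rfl
  | cons a u ih => simp [Aw, ih]

/-- Appending one block `[j, j+1]` at the level of normal forms. -/
def Tj (j : ℕ) (s : List ℕ) : List ℕ := insL (insL s j) (j + 1)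

theorem nfL_concat2 (w : List ℕ) (j : ℕ) : nfL (w ++ [j, j + 1]) = Tj j (nfL w) := by
  rw [nfL_append]; rfl

theorem nfL_Aw_concat (u : List ℕ) (k : ℕ) :
    nfL (Aw (u ++ [k])) = Tj k (nfL (Aw u)) := by
  rw [Aw_append]
  exact nfL_concat2 (Aw u) k

theorem Tj_eq (s : List ℕ) (j : ℕ) :
    Tj j s = s.filter (fun b => b ≤ j) ++ j :: (j + 1) ::
      (s.filter (fun b => ¬ b ≤ j)).map (· + 2) := by
  rw [Tj, insL, f3 s (le_refl j), f4 s (le_refl j)]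
  have e : List.filter (fun b => decide (j < b) && decide (b ≤ j)) s = [] := by
    rw [List.filter_eq_nil_iff]
    intro c _
    simp only [Bool.and_eq_true, decide_eq_true_eq, not_and]
    omega
  rw [e, List.map_map]
  have e2 : List.map ((· + 1) ∘ (· + 1)) (List.filter (fun b => decide ¬b ≤ j) s)
      = List.map (· + 2) (List.filter (fun b => decide ¬b ≤ j) s) :=
    List.map_congr_left (fun a _ => by simp [Function.comp])
  rw [e2]
  simp

theorem mem_Tj_iff {b : ℕ} {s : List ℕ} {j : ℕ} :
    b ∈ Tj j s ↔ (b ∈ s ∧ b ≤ j) ∨ b = j ∨ b = j + 1 ∨ (∃ c ∈ s, ¬ c ≤ j ∧ b = c + 2) := by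
  rw [Tj_eq]
  simp only [List.mem_append, List.mem_filter, List.mem_cons, List.mem_map, decide_eq_true_eq]
  constructor
  · rintro (⟨h1, h2⟩ | rfl | rfl | ⟨c, ⟨hc1, hc2⟩, rfl⟩)
    · exact Or.inl ⟨h1, h2⟩
    · exact Or.inr (Or.inl rfl)
    · exact Or.inr (Or.inr (Or.inl rfl))
    · exact Or.inr (Or.inr (Or.inr ⟨c, hc1, hc2, rfl⟩))
  · rintro (⟨h1, h2⟩ | rfl | rfl | ⟨c, hc1, hc2, rfl⟩)
    · exact Or.inl ⟨h1, h2⟩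
    · exact Or.inr (Or.inl rfl)
    · exact Or.inr (Or.inr (Or.inl rfl))
    · exact Or.inr (Or.inr (Or.inr ⟨c, ⟨hc1, hc2⟩, rfl⟩))

theorem Tj_inj {s t : List ℕ} (hs : s.Pairwise (· ≤ ·)) (ht : t.Pairwise (· ≤ ·)) {j : ℕ}
    (h : Tj j s = Tj j t) : s = t := by
  unfold Tj at h
  exact insL_inj hs ht j (insL_inj (insL_sorted hs j) (insL_sorted ht j) (j + 1) h)

section TjFilters

theorem FT1 {c j : ℕ} (h : c < j) (s : List ℕ) :
    (Tj j s).filter (fun b => b ≤ c) = s.filter (fun b => b ≤ c) := by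
  rw [Tj_eq, List.filter_append, List.filter_cons, List.filter_cons, List.filter_filter,
    List.filter_map]
  have e1 : List.filter (fun b => decide (b ≤ c) && decide (b ≤ j)) s
      = List.filter (fun b => decide (b ≤ c)) s :=
    List.filter_congr (fun b _ => by by_cases hb : b ≤ c <;> simp [hb]; omega)
  have e2 : List.filter ((fun b => decide (b ≤ c)) ∘ (· + 2))
      (List.filter (fun b => decide ¬b ≤ j) s) = [] := by
    rw [List.filter_eq_nil_iff]
    intro b hb
    simp only [List.mem_filter, decide_eq_true_eq] at hb
    simp only [Function.comp_apply, decide_eq_true_eq]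
    omega
  rw [e1, e2, if_neg (by simp; omega), if_neg (by simp; omega)]
  simp

theorem FT2 (j : ℕ) (s : List ℕ) :
    (Tj j s).filter (fun b => b ≤ j) = s.filter (fun b => b ≤ j) ++ [j] := by
  rw [Tj_eq, List.filter_append, List.filter_cons, List.filter_cons, List.filter_filter,
    List.filter_map]
  have e1 : List.filter (fun b => decide (b ≤ j) && decide (b ≤ j)) s
      = List.filter (fun b => decide (b ≤ j)) s :=
    List.filter_congr (fun b _ => by by_cases hb : b ≤ j <;> simp [hb])
  have e2 : List.filter ((fun b => decide (b ≤ j)) ∘ (· + 2))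
      (List.filter (fun b => decide ¬b ≤ j) s) = [] := by
    rw [List.filter_eq_nil_iff]
    intro b hb
    simp only [List.mem_filter, decide_eq_true_eq] at hb
    simp only [Function.comp_apply, decide_eq_true_eq]
    omega
  rw [e1, e2, if_pos (by simp), if_neg (by simp)]
  simp

theorem FT3 {k j : ℕ} (h : k + 1 < j) (s : List ℕ) :
    (Tj j s).filter (fun b => b = k + 1) = s.filter (fun b => b = k + 1) := by
  rw [Tj_eq, List.filter_append, List.filter_cons, List.filter_cons, List.filter_filter,
    List.filter_map]
  have e1 : List.filter (fun b => decide (b = k + 1) && decide (b ≤ j)) s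
      = List.filter (fun b => decide (b = k + 1)) s :=
    List.filter_congr (fun b _ => by by_cases hb : b = k + 1 <;> simp [hb]; omega)
  have e2 : List.filter ((fun b => decide (b = k + 1)) ∘ (· + 2))
      (List.filter (fun b => decide ¬b ≤ j) s) = [] := by
    rw [List.filter_eq_nil_iff]
    intro b hb
    simp only [List.mem_filter, decide_eq_true_eq] at hb
    simp only [Function.comp_apply, decide_eq_true_eq]
    omega
  rw [e1, e2, if_neg (by simp; omega), if_neg (by simp; omega)]
  simp

theorem FT4 (k : ℕ) (t : List ℕ) :
    (Tj k t).filter (fun b => b = k + 1) = [k + 1] := by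
  rw [Tj_eq, List.filter_append, List.filter_cons, List.filter_cons, List.filter_filter,
    List.filter_map]
  have e1 : List.filter (fun b => decide (b = k + 1) && decide (b ≤ k)) t = [] := by
    rw [List.filter_eq_nil_iff]
    intro b _
    simp only [Bool.and_eq_true, decide_eq_true_eq, not_and]
    omega
  have e2 : List.filter ((fun b => decide (b = k + 1)) ∘ (· + 2))
      (List.filter (fun b => decide ¬b ≤ k) t) = [] := by
    rw [List.filter_eq_nil_iff]
    intro b hb
    simp only [List.mem_filter, decide_eq_true_eq] at hb
    simp only [Function.comp_apply, decide_eq_true_eq]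
    omega
  rw [e1, e2, if_neg (by simp), if_pos (by simp)]
  simp

theorem FT5 {k j : ℕ} (h : k + 1 < j) (s : List ℕ) :
    (Tj j s).filter (fun b => ¬ b ≤ k + 1) =
      s.filter (fun b => decide ¬(b ≤ k + 1) && decide (b ≤ j)) ++ j :: (j + 1) ::
        (s.filter (fun b => ¬ b ≤ j)).map (· + 2) := by
  rw [Tj_eq, List.filter_append, List.filter_cons, List.filter_cons, List.filter_filter,
    List.filter_map]
  have e2 : List.filter ((fun b => decide ¬b ≤ k + 1) ∘ (· + 2))
      (List.filter (fun b => decide ¬b ≤ j) s)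
      = List.filter (fun b => decide ¬b ≤ j) s := by
    rw [List.filter_eq_self]
    intro b hb
    simp only [List.mem_filter, decide_eq_true_eq] at hb
    simp only [Function.comp_apply, decide_eq_true_eq]
    omega
  rw [e2, if_pos (by simp; omega), if_pos (by simp; omega)]

theorem FT6 (k : ℕ) (t : List ℕ) :
    (Tj k t).filter (fun b => ¬ b ≤ k + 1) = (t.filter (fun b => ¬ b ≤ k)).map (· + 2) := by
  rw [Tj_eq, List.filter_append, List.filter_cons, List.filter_cons, List.filter_filter,
    List.filter_map]
  have e1 : List.filter (fun b => decide ¬b ≤ k + 1 && decide (b ≤ k)) t = [] := by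
    rw [List.filter_eq_nil_iff]
    intro b _
    simp only [Bool.and_eq_true, decide_eq_true_eq, not_and]
    omega
  have e2 : List.filter ((fun b => decide ¬b ≤ k + 1) ∘ (· + 2))
      (List.filter (fun b => decide ¬b ≤ k) t)
      = List.filter (fun b => decide ¬b ≤ k) t := by
    rw [List.filter_eq_self]
    intro b hb
    simp only [List.mem_filter, decide_eq_true_eq] at hb
    simp only [Function.comp_apply, decide_eq_true_eq]
    omega
  rw [e1, e2, if_neg (by simp), if_neg (by simp)]
  simp

end TjFilters

theorem diamond {s t : List ℕ} (hs : s.Pairwise (· ≤ ·)) (ht : t.Pairwise (· ≤ ·)) {j k : ℕ}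
    (hkj : k < j) (h : Tj j s = Tj k t) :
    k + 3 ≤ j ∧ ∃ r, r.Pairwise (· ≤ ·) ∧ s = Tj k r ∧ t = Tj (j - 2) r := by
  have hmemR : ∀ b ∈ Tj k t, b ≠ k + 2 := by
    intro b hb
    rcases mem_Tj_iff.1 hb with ⟨_, h2⟩ | rfl | rfl | ⟨c, _, hc2, rfl⟩ <;> omega
  have hj3 : k + 3 ≤ j := by
    by_contra hcon
    have hj' : j = k + 1 ∨ j = k + 2 := by omega
    have hmem : (k + 2) ∈ Tj j s := by
      rcases hj' with rfl | rfl
      · exact mem_Tj_iff.2 (Or.inr (Or.inr (Or.inl (by omega))))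
      · exact mem_Tj_iff.2 (Or.inr (Or.inl rfl))
    exact hmemR _ (h ▸ hmem) rfl
  have hs2 : ∀ b ∈ s, b ≠ k + 2 := by
    intro b hb hbeq
    apply hmemR (k + 2) _ rfl
    rw [← h]
    exact mem_Tj_iff.2 (Or.inl ⟨hbeq ▸ hb, by omega⟩)
  have hA : s.filter (fun b => b ≤ k) = t.filter (fun b => b ≤ k) ++ [k] := by
    have e := congrArg (List.filter (fun b => b ≤ k)) h
    rwa [FT1 hkj, FT2] at e
  have hB : s.filter (fun b => b = k + 1) = [k + 1] := by
    have e := congrArg (List.filter (fun b => b = k + 1)) h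
    rwa [FT3 (by omega), FT4] at e
  set C := s.filter (fun b => decide ¬(b ≤ k + 1) && decide (b ≤ j)) with hCdef
  set D := s.filter (fun b => ¬ b ≤ j) with hDdef
  have hE2 : C ++ j :: (j + 1) :: D.map (· + 2) = (t.filter (fun b => ¬ b ≤ k)).map (· + 2) := by
    have e := congrArg (List.filter (fun b => ¬ b ≤ k + 1)) h
    rwa [FT5 (by omega), FT6] at e
  -- membership facts
  have hCm : ∀ b ∈ C, k + 3 ≤ b ∧ b ≤ j := by
    intro b hb
    rw [hCdef, List.mem_filter] at hb
    obtain ⟨hbs, hp⟩ := hb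
    simp only [Bool.and_eq_true, decide_eq_true_eq] at hp
    have := hs2 b hbs
    omega
  have hDm : ∀ b ∈ D, j + 1 ≤ b := by
    intro b hb
    rw [hDdef, List.mem_filter] at hb
    obtain ⟨hbs, hp⟩ := hb
    simp only [decide_eq_true_eq] at hp
    omega
  have hCDm : ∀ b ∈ C ++ D, k + 3 ≤ b := by
    intro b hb
    rcases List.mem_append.1 hb with hb | hb
    · exact (hCm b hb).1
    · have := hDm b hb; omega
  -- decomposition of s
  have h2 : s.filter (fun b => ¬ b ≤ k) = [k + 1] ++ s.filter (fun b => ¬ b ≤ k + 1) := by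
    have hsf : (s.filter (fun b => ¬ b ≤ k)).Pairwise (· ≤ ·) := hs.filter _
    have e := sorted_split hsf (k + 1)
    rw [List.filter_filter, List.filter_filter] at e
    have ea : s.filter (fun b => decide (b ≤ k + 1) && decide ¬b ≤ k)
        = s.filter (fun b => b = k + 1) :=
      List.filter_congr (fun b _ => by
        by_cases h1 : b ≤ k <;> by_cases h2 : b ≤ k + 1 <;> simp [h1, h2] <;> omega)
    have eb : s.filter (fun b => decide ¬b ≤ k + 1 && decide ¬b ≤ k)
        = s.filter (fun b => ¬ b ≤ k + 1) :=
      List.filter_congr (fun b _ => by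
        by_cases h1 : b ≤ k <;> by_cases h2 : b ≤ k + 1 <;> simp [h1, h2] <;> omega)
    rw [ea, eb, hB] at e
    exact e
  have h3 : s.filter (fun b => ¬ b ≤ k + 1) = C ++ D := by
    have hsf : (s.filter (fun b => ¬ b ≤ k + 1)).Pairwise (· ≤ ·) := hs.filter _
    have e := sorted_split hsf j
    rw [List.filter_filter, List.filter_filter] at e
    have ea : s.filter (fun b => decide (b ≤ j) && decide ¬b ≤ k + 1) = C :=
      List.filter_congr (fun b _ => by
        by_cases h1 : b ≤ k + 1 <;> by_cases h2 : b ≤ j <;> simp [h1, h2])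
    have eb : s.filter (fun b => decide ¬b ≤ j && decide ¬b ≤ k + 1) = D :=
      List.filter_congr (fun b _ => by
        by_cases h1 : b ≤ k + 1 <;> by_cases h2 : b ≤ j <;> simp [h1, h2] <;> omega)
    rw [ea, eb] at e
    exact e
  have hsplit : s = t.filter (fun b => b ≤ k) ++ [k] ++ [k + 1] ++ C ++ D := by
    have e := sorted_split hs k
    rw [hA, h2, h3] at e
    rw [e]
    simp [List.append_assoc]
  -- the common "parent" r
  set r := t.filter (fun b => b ≤ k) ++ (C ++ D).map (fun b => b - 2) with hrdef
  have p1 : (t.filter (fun b => b ≤ k)).filter (fun b => b ≤ k) = t.filter (fun b => b ≤ k) :=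
    List.filter_eq_self.2 (fun b hb => (List.mem_filter.1 hb).2)
  have p2 : ((C ++ D).map (fun b => b - 2)).filter (fun b => b ≤ k) = [] := by
    rw [List.filter_eq_nil_iff]
    intro b hb
    rcases List.mem_map.1 hb with ⟨c, hc, rfl⟩
    have := hCDm c hc
    simp only [decide_eq_true_eq]
    omega
  have hr1 : r.filter (fun b => b ≤ k) = t.filter (fun b => b ≤ k) := by
    rw [hrdef, List.filter_append, p1, p2, List.append_nil]
  have p3 : (t.filter (fun b => b ≤ k)).filter (fun b => ¬ b ≤ k) = [] := by
    rw [List.filter_eq_nil_iff]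
    intro b hb
    have := (List.mem_filter.1 hb).2
    simp only [decide_eq_true_eq] at this
    simp only [Bool.not_eq_true, decide_eq_false_iff_not, Decidable.not_not]
    exact this
  have p4 : ((C ++ D).map (fun b => b - 2)).filter (fun b => ¬ b ≤ k)
      = (C ++ D).map (fun b => b - 2) := by
    rw [List.filter_eq_self]
    intro b hb
    rcases List.mem_map.1 hb with ⟨c, hc, rfl⟩
    have := hCDm c hc
    simp only [decide_eq_true_eq]
    omega
  have hr2 : r.filter (fun b => ¬ b ≤ k) = (C ++ D).map (fun b => b - 2) := by
    rw [hrdef, List.filter_append, p3, p4, List.nil_append]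
  have hmap2 : ((C ++ D).map (fun b => b - 2)).map (· + 2) = C ++ D := by
    rw [List.map_map]
    have e : ∀ c ∈ C ++ D, ((· + 2) ∘ (fun b => b - 2)) c = id c := by
      intro c hc
      have := hCDm c hc
      simp only [Function.comp_apply, id]
      omega
    rw [List.map_congr_left e, List.map_id]
  have hsTj : s = Tj k r := by
    rw [Tj_eq, hr1, hr2, hmap2, hsplit]
    simp [List.append_assoc]
  -- decomposition of t
  have htgk : t.filter (fun b => ¬ b ≤ k)
      = C.map (fun b => b - 2) ++ (j - 2) :: (j - 1) :: D := by
    have e := congrArg (List.map (fun b => b - 2)) hE2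
    rw [List.map_map] at e
    have e1 : List.map ((fun b => b - 2) ∘ (· + 2)) (t.filter (fun b => ¬ b ≤ k))
        = t.filter (fun b => ¬ b ≤ k) := by
      have e1' : ∀ c ∈ t.filter (fun b => ¬ b ≤ k), ((fun b => b - 2) ∘ (· + 2)) c = id c := by
        intro c _; simp [Function.comp]
      rw [List.map_congr_left e1', List.map_id]
    rw [e1] at e
    rw [← e, List.map_append, List.map_cons, List.map_cons, List.map_map]
    have e2 : List.map ((fun b => b - 2) ∘ (· + 2)) D = D := by
      have e2' : ∀ c ∈ D, ((fun b => b - 2) ∘ (· + 2)) c = id c := by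
        intro c _; simp [Function.comp]
      rw [List.map_congr_left e2', List.map_id]
    rw [e2]
    have ej : j + 1 - 2 = j - 1 := by omega
    simp [ej]
  have p5 : (t.filter (fun b => b ≤ k)).filter (fun b => b ≤ j - 2)
      = t.filter (fun b => b ≤ k) := by
    rw [List.filter_eq_self]
    intro b hb
    have := (List.mem_filter.1 hb).2
    simp only [decide_eq_true_eq] at this ⊢
    omega
  have p6 : (C.map (fun b => b - 2)).filter (fun b => b ≤ j - 2) = C.map (fun b => b - 2) := by
    rw [List.filter_eq_self]
    intro b hb
    rcases List.mem_map.1 hb with ⟨c, hc, rfl⟩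
    have := hCm c hc
    simp only [decide_eq_true_eq]
    omega
  have p7 : (D.map (fun b => b - 2)).filter (fun b => b ≤ j - 2) = [] := by
    rw [List.filter_eq_nil_iff]
    intro b hb
    rcases List.mem_map.1 hb with ⟨c, hc, rfl⟩
    have := hDm c hc
    simp only [decide_eq_true_eq]
    omega
  have hr3 : r.filter (fun b => b ≤ j - 2)
      = t.filter (fun b => b ≤ k) ++ C.map (fun b => b - 2) := by
    rw [hrdef, List.map_append, List.filter_append, List.filter_append, p5, p6, p7,
      List.append_nil]
  have p8 : (t.filter (fun b => b ≤ k)).filter (fun b => ¬ b ≤ j - 2) = [] := by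
    rw [List.filter_eq_nil_iff]
    intro b hb
    have := (List.mem_filter.1 hb).2
    simp only [decide_eq_true_eq] at this
    simp only [Bool.not_eq_true, decide_eq_false_iff_not, Decidable.not_not]
    omega
  have p9 : (C.map (fun b => b - 2)).filter (fun b => ¬ b ≤ j - 2) = [] := by
    rw [List.filter_eq_nil_iff]
    intro b hb
    rcases List.mem_map.1 hb with ⟨c, hc, rfl⟩
    have := hCm c hc
    simp only [Bool.not_eq_true, decide_eq_false_iff_not, Decidable.not_not]
    omega
  have p10 : (D.map (fun b => b - 2)).filter (fun b => ¬ b ≤ j - 2) = D.map (fun b => b - 2) := by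
    rw [List.filter_eq_self]
    intro b hb
    rcases List.mem_map.1 hb with ⟨c, hc, rfl⟩
    have := hDm c hc
    simp only [decide_eq_true_eq]
    omega
  have hr4 : r.filter (fun b => ¬ b ≤ j - 2) = D.map (fun b => b - 2) := by
    rw [hrdef, List.map_append, List.filter_append, List.filter_append, p8, p9, p10]
    simp
  have hmapD : (D.map (fun b => b - 2)).map (· + 2) = D := by
    rw [List.map_map]
    have e : ∀ c ∈ D, ((· + 2) ∘ (fun b => b - 2)) c = id c := by
      intro c hc
      have := hDm c hc
      simp only [Function.comp_apply, id]
      omega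
    rw [List.map_congr_left e, List.map_id]
  have htTj : t = Tj (j - 2) r := by
    rw [Tj_eq, hr3, hr4, hmapD]
    have ej : j - 2 + 1 = j - 1 := by omega
    rw [ej]
    conv_lhs => rw [sorted_split ht k, htgk]
    simp [List.append_assoc]
  -- r is sorted
  have hCD : (C ++ D).Pairwise (· ≤ ·) := by
    rw [List.pairwise_append]
    refine ⟨hs.filter _, hs.filter _, ?_⟩
    intro a ha b hb
    have h1 := (hCm a ha).2
    have h2 := hDm b hb
    omega
  have hrs : r.Pairwise (· ≤ ·) := by
    rw [hrdef, List.pairwise_append]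
    refine ⟨ht.filter _, ?_, ?_⟩
    · exact List.Pairwise.map _ (fun hab => by omega) hCD
    · intro a ha b hb
      have ha2 := (List.mem_filter.1 ha).2
      simp only [decide_eq_true_eq] at ha2
      rcases List.mem_map.1 hb with ⟨c, hc, rfl⟩
      have := hCDm c hc
      omega
  exact ⟨hj3, r, hrs, hsTj, htTj⟩

theorem length_Tj {s : List ℕ} (hs : s.Pairwise (· ≤ ·)) (j : ℕ) :
    (Tj j s).length = s.length + 2 := by
  have e := congrArg List.length (sorted_split hs j)
  rw [Tj_eq]
  simp only [List.length_append, List.length_cons, List.length_map] at e ⊢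
  omega

theorem key_aux (N : ℕ) : ∀ s : List ℕ, s.length ≤ N → s.Pairwise (· ≤ ·) →
    ∀ j u, Tj j s = nfL (Aw u) → ∃ w, s = nfL (Aw w) := by
  induction N with
  | zero =>
    intro s hlen hs j u h
    have hsnil : s = [] := List.length_eq_zero_iff.1 (by omega)
    subst hsnil
    rcases List.eq_nil_or_concat u with rfl | ⟨u', k, rfl⟩
    · exfalso
      have hj : j ∈ Tj j [] := mem_Tj_iff.2 (Or.inr (Or.inl rfl))
      rw [h] at hj
      simp [nfL, Aw] at hj
    · rw [List.concat_eq_append, nfL_Aw_concat] at h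
      have htt : (nfL (Aw u')).Pairwise (· ≤ ·) := nfL_sorted _
      rcases Nat.lt_trichotomy j k with hjk | rfl | hkj
      · obtain ⟨-, r, -, -, h2⟩ := diamond htt (List.Pairwise.nil) hjk h.symm
        exfalso
        have hk : (k - 2) ∈ Tj (k - 2) r := mem_Tj_iff.2 (Or.inr (Or.inl rfl))
        rw [← h2] at hk
        simp at hk
      · exact ⟨u', Tj_inj (List.Pairwise.nil) htt h⟩
      · obtain ⟨-, r, -, h1, -⟩ := diamond (List.Pairwise.nil) htt hkj h
        exfalso
        have hk : k ∈ Tj k r := mem_Tj_iff.2 (Or.inr (Or.inl rfl))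
        rw [← h1] at hk
        simp at hk
  | succ N ih =>
    intro s hlen hs j u h
    rcases List.eq_nil_or_concat u with rfl | ⟨u', k, rfl⟩
    · exfalso
      have hj : j ∈ Tj j s := mem_Tj_iff.2 (Or.inr (Or.inl rfl))
      rw [h] at hj
      simp [nfL, Aw] at hj
    · rw [List.concat_eq_append, nfL_Aw_concat] at h
      have htt : (nfL (Aw u')).Pairwise (· ≤ ·) := nfL_sorted _
      have hlen2 : (nfL (Aw u')).length = s.length := by
        have e := congrArg List.length h
        rw [length_Tj hs, length_Tj htt] at e
        omega
      rcases Nat.lt_trichotomy j k with hjk | rfl | hkj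
      · obtain ⟨-, r, hr, h1, h2⟩ := diamond htt hs hjk h.symm
        have hrlen : r.length + 2 = s.length := by
          have e := congrArg List.length h1
          rw [length_Tj hr] at e
          omega
        obtain ⟨w, hw⟩ := ih r (by omega) hr j u' h1.symm
        refine ⟨w ++ [k - 2], ?_⟩
        rw [nfL_Aw_concat, ← hw, h2]
      · exact ⟨u', Tj_inj hs htt h⟩
      · obtain ⟨-, r, hr, h1, h2⟩ := diamond hs htt hkj h
        have hrlen : r.length + 2 = s.length := by
          have e := congrArg List.length h2
          rw [length_Tj hr] at e
          omega
        obtain ⟨w, hw⟩ := ih r (by omega) hr (j - 2) u' h2.symm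
        refine ⟨w ++ [k], ?_⟩
        rw [nfL_Aw_concat, ← hw, h1]

theorem key_lemma {s : List ℕ} (hs : s.Pairwise (· ≤ ·)) {j : ℕ} {u : List ℕ}
    (h : Tj j s = nfL (Aw u)) : ∃ w, s = nfL (Aw w) :=
  key_aux s.length s le_rfl hs j u h

/-! ### The positive monoid as a concrete quotient, and its group of fractions -/

instance nfSetoid : Setoid (List ℕ) where
  r u v := nfL u = nfL v
  iseqv := ⟨fun _ => rfl, Eq.symm, Eq.trans⟩

def MF : Type := Quotient nfSetoid

def MF.mk (u : List ℕ) : MF := Quotient.mk nfSetoid u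

theorem MF.ind {motive : MF → Prop} (h : ∀ u, motive (MF.mk u)) : ∀ a, motive a :=
  Quotient.ind h

theorem MF.sound {u v : List ℕ} (h : nfL u = nfL v) : MF.mk u = MF.mk v := Quotient.sound h

theorem MF.exact {u v : List ℕ} (h : MF.mk u = MF.mk v) : nfL u = nfL v := Quotient.exact h

/-- Multiplication, *reversed* (so that mathlib's left-fraction Ore localization applies). -/
instance : Monoid MF where
  mul := Quotient.map₂ (fun u v => v ++ u) (by
    intro u u' hu v v' hv
    show nfL (v ++ u) = nfL (v' ++ u')
    exact ((mv_iff_nfL_eq.2 hv).append (mv_iff_nfL_eq.2 hu)).nfL_eq)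
  one := MF.mk []
  mul_assoc := by
    rintro ⟨a⟩ ⟨b⟩ ⟨c⟩
    apply Quotient.sound
    show nfL (c ++ (b ++ a)) = nfL ((c ++ b) ++ a)
    rw [List.append_assoc]
  one_mul := by
    rintro ⟨a⟩
    apply Quotient.sound
    show nfL (a ++ []) = nfL a
    rw [List.append_nil]
  mul_one := by
    rintro ⟨a⟩
    apply Quotient.sound
    show nfL ([] ++ a) = nfL a
    rw [List.nil_append]

theorem mk_mul (u v : List ℕ) : MF.mk u * MF.mk v = MF.mk (v ++ u) := rfl

theorem MF.mul_left_cancel {a b c : MF} (h : a * b = a * c) : b = c := by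
  induction a using MF.ind
  induction b using MF.ind
  induction c using MF.ind
  rename_i a b c
  rw [mk_mul, mk_mul] at h
  exact MF.sound (nfL_right_cancel a (MF.exact h))

theorem MF.mul_right_cancel {a b c : MF} (h : b * a = c * a) : b = c := by
  induction a using MF.ind
  induction b using MF.ind
  induction c using MF.ind
  rename_i a b c
  rw [mk_mul, mk_mul] at h
  exact MF.sound (nfL_left_cancel a (MF.exact h))

theorem crm_mf (a b : MF) : ∃ n d : MF, d * a = n * b := by
  induction a using MF.ind
  induction b using MF.ind
  rename_i a b
  obtain ⟨c, d, h⟩ := crm a b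
  exact ⟨MF.mk d, MF.mk c, (mk_mul _ _).trans ((MF.sound h.nfL_eq).trans (mk_mul _ _).symm)⟩

noncomputable instance : OreLocalization.OreSet (⊤ : Submonoid MF) where
  ore_right_cancel r₁ r₂ s h := ⟨1, by
    simp only [OneMemClass.coe_one, one_mul]
    exact MF.mul_right_cancel h⟩
  oreNum r s := Classical.choose (crm_mf r (s : MF))
  oreDenom r s := ⟨Classical.choose (Classical.choose_spec (crm_mf r (s : MF))), trivial⟩
  ore_eq r s := Classical.choose_spec (Classical.choose_spec (crm_mf r (s : MF)))

/-- The group of fractions of the Thompson monoid. -/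
abbrev GF : Type := OreLocalization (⊤ : Submonoid MF) MF

theorem exists_left_inv (q : GF) : ∃ p : GF, p * q = 1 := by
  refine OreLocalization.ind (fun r s => ?_) q
  refine ⟨(s : MF) /ₒ ⟨r, trivial⟩, ?_⟩
  rw [OreLocalization.mul_cancel]
  exact OreLocalization.div_eq_one' (Submonoid.mem_top _)

noncomputable instance : Group GF :=
  { (inferInstance : Monoid GF) with
    inv := fun q => Classical.choose (exists_left_inv q)
    inv_mul_cancel := fun q => Classical.choose_spec (exists_left_inv q) }

theorem numHom_inj {a b : MF}
    (h : OreLocalization.numeratorHom a = (OreLocalization.numeratorHom b : GF)) : a = b := by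
  rw [OreLocalization.numeratorHom_apply, OreLocalization.numeratorHom_apply,
    OreLocalization.oreDiv_eq_iff] at h
  obtain ⟨u, v, h1, h2⟩ := h
  rw [smul_eq_mul] at h1
  rw [Submonoid.smul_def, smul_eq_mul] at h1
  have hu : (u : MF) = v := by
    simpa using h2
  rw [← hu] at h1
  exact (MF.mul_left_cancel h1).symm

end ThGrpAux

/-- The positive monoid `F₊`: submonoid of `F` generated by the `xᵢ`. -/
def Fpos : Submonoid ThompsonF := Submonoid.closure (Set.range x)

/-- The positive monoid `F₃,₊`: submonoid of `F₃` generated by the `yᵢ`. -/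
def F3pos : Submonoid BrownF3 := Submonoid.closure (Set.range y)

namespace ThGrpAux

theorem rel_x {n k : ℕ} (h : k < n) : x n * x k = x k * x (n + 1) := by
  have hmem : (FreeGroup.of n * FreeGroup.of k * (FreeGroup.of (n + 1))⁻¹ * (FreeGroup.of k)⁻¹)
      ∈ thompsonRels := ⟨n, k, h, rfl⟩
  have h1 : PresentedGroup.mk thompsonRels
      (FreeGroup.of n * FreeGroup.of k * (FreeGroup.of (n + 1))⁻¹ * (FreeGroup.of k)⁻¹) = 1 :=
    (QuotientGroup.eq_one_iff _).2 (Subgroup.subset_normalClosure hmem)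
  simp only [map_mul, map_inv] at h1
  rw [mul_inv_eq_one, mul_inv_eq_iff_eq_mul] at h1
  exact h1

theorem rel_y {q p : ℕ} (h : p < q) : y q * y p = y p * y (q + 2) := by
  have hmem : (FreeGroup.of q * FreeGroup.of p * (FreeGroup.of (q + 2))⁻¹ * (FreeGroup.of p)⁻¹)
      ∈ brownRels := ⟨q, p, h, rfl⟩
  have h1 : PresentedGroup.mk brownRels
      (FreeGroup.of q * FreeGroup.of p * (FreeGroup.of (q + 2))⁻¹ * (FreeGroup.of p)⁻¹) = 1 :=
    (QuotientGroup.eq_one_iff _).2 (Subgroup.subset_normalClosure hmem)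
  simp only [map_mul, map_inv] at h1
  rw [mul_inv_eq_one, mul_inv_eq_iff_eq_mul] at h1
  exact h1

/-! ### Words in the generators -/

def Xw (w : List ℕ) : ThompsonF := (w.map x).prod

def Yw (w : List ℕ) : BrownF3 := (w.map y).prod

theorem Xw_nil : Xw [] = 1 := rfl

theorem Xw_append (u v : List ℕ) : Xw (u ++ v) = Xw u * Xw v := by
  simp [Xw]

theorem Xw_cons (a : ℕ) (w : List ℕ) : Xw (a :: w) = x a * Xw w := by
  simp [Xw]

theorem Yw_append (u v : List ℕ) : Yw (u ++ v) = Yw u * Yw v := by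
  simp [Yw]

theorem Yw_cons (a : ℕ) (w : List ℕ) : Yw (a :: w) = y a * Yw w := by
  simp [Yw]

theorem Xw_step {u v : List ℕ} (h : Step u v) : Xw u = Xw v := by
  rcases h with ⟨w₁, w₂, n, k, hkn⟩
  rw [show (n : ℕ) :: k :: w₂ = [n, k] ++ w₂ by rfl,
    show (k : ℕ) :: (n + 1) :: w₂ = [k, n + 1] ++ w₂ by rfl]
  rw [Xw_append, Xw_append, Xw_append, Xw_append]
  congr 1
  congr 1
  show x n * (x k * 1) = x k * (x (n + 1) * 1)
  rw [mul_one, mul_one]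
  exact rel_x hkn

theorem Mv.Xw_eq {u v : List ℕ} (h : Mv u v) : Xw u = Xw v := by
  induction h with
  | rel a b h => exact Xw_step h
  | refl a => rfl
  | symm a b _ ih => exact ih.symm
  | trans a b c _ _ ih1 ih2 => exact ih1.trans ih2

theorem Xw_eq_of_nfL_eq {u v : List ℕ} (h : nfL u = nfL v) : Xw u = Xw v :=
  (mv_iff_nfL_eq.2 h).Xw_eq

/-! ### The homomorphism from `F` to the group of fractions -/

noncomputable def NH : MF →* GF := OreLocalization.numeratorHom

def gens (i : ℕ) : MF := MF.mk [i]

theorem grel {n k : ℕ} (h : k < n) : gens k * gens n = gens (n + 1) * gens k := by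
  rw [gens, gens, gens, mk_mul, mk_mul]
  exact MF.sound (Step.mk [] [] n k h).mv.nfL_eq

noncomputable def fgen (i : ℕ) : GF := (NH (gens i))⁻¹

theorem frel : ∀ r ∈ thompsonRels, FreeGroup.lift fgen r = 1 := by
  rintro r ⟨n, k, hkn, rfl⟩
  simp only [map_mul, map_inv, FreeGroup.lift_apply_of, fgen, inv_inv]
  have hg : NH (gens k) * NH (gens n) = NH (gens (n + 1)) * NH (gens k) := by
    rw [← map_mul, ← map_mul, grel hkn]
  rw [mul_assoc, mul_assoc, ← hg, inv_mul_cancel_left, inv_mul_cancel]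

noncomputable def ψ : ThompsonF →* GF := PresentedGroup.toGroup frel

theorem ψ_x (i : ℕ) : ψ (x i) = fgen i := PresentedGroup.toGroup.of frel

theorem ψ_Xw (w : List ℕ) : ψ (Xw w) = (NH (MF.mk w))⁻¹ := by
  induction w using List.reverseRecOn with
  | nil =>
    show ψ 1 = (NH (1 : MF))⁻¹
    rw [map_one, map_one, inv_one]
  | append_singleton w a ih =>
    rw [Xw_append, map_mul, ih, show Xw [a] = x a by simp [Xw], ψ_x, fgen, ← mul_inv_rev,
      ← map_mul, gens, mk_mul]

theorem nfL_eq_of_Xw_eq {u v : List ℕ} (h : Xw u = Xw v) : nfL u = nfL v := by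
  have e := congrArg ψ h
  rw [ψ_Xw, ψ_Xw] at e
  exact MF.exact (numHom_inj (inv_injective e))

/-! ### Fraction decomposition in `F₃` -/

theorem one_crm_y (v : List ℕ) (i : ℕ) : ∃ c i', Yw (i :: c) = Yw (v ++ [i']) := by
  induction v generalizing i with
  | nil => exact ⟨[], i, rfl⟩
  | cons p v' ih =>
    rcases Nat.lt_trichotomy i p with hip | rfl | hpi
    · obtain ⟨c₀, i₀, h₀⟩ := ih i
      refine ⟨(p + 2) :: c₀, i₀, ?_⟩
      rw [Yw_cons, Yw_cons, ← mul_assoc, ← rel_y hip, show (p :: v' ++ [i₀]) = p :: (v' ++ [i₀])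
        by rfl, Yw_cons, mul_assoc, ← Yw_cons, h₀]
    · exact ⟨v' ++ [i], i, rfl⟩
    · obtain ⟨c₀, i₀, h₀⟩ := ih (i + 2)
      refine ⟨p :: c₀, i₀, ?_⟩
      rw [Yw_cons, Yw_cons, ← mul_assoc, rel_y hpi, show (p :: v' ++ [i₀]) = p :: (v' ++ [i₀])
        by rfl, Yw_cons, mul_assoc, ← Yw_cons, h₀]

theorem crm_y (u v : List ℕ) : ∃ c d, Yw (u ++ c) = Yw (v ++ d) := by
  induction u generalizing v with
  | nil => exact ⟨v, [], by rw [List.nil_append, List.append_nil]⟩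
  | cons i u' ih =>
    obtain ⟨c₀, i₀, h₀⟩ := one_crm_y v i
    obtain ⟨c', d', h'⟩ := ih c₀
    refine ⟨c', [i₀] ++ d', ?_⟩
    have e1 : Yw (i :: u' ++ c') = y i * Yw (u' ++ c') := by
      rw [show (i :: u' ++ c') = i :: (u' ++ c') by rfl, Yw_cons]
    rw [e1, h', Yw_append, ← mul_assoc, ← Yw_cons, h₀,
      Yw_append, mul_assoc, ← Yw_append, ← Yw_append]

theorem brown_frac (h : BrownF3) : ∃ u v, h = Yw u * (Yw v)⁻¹ := by
  let S : Subgroup BrownF3 :=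
    { carrier := {g | ∃ u v, g = Yw u * (Yw v)⁻¹}
      one_mem' := ⟨[], [], by simp [Yw]⟩
      mul_mem' := by
        rintro a b ⟨u, v, rfl⟩ ⟨u', v', rfl⟩
        obtain ⟨c, d, hcd⟩ := crm_y u' v
        have e : (Yw v)⁻¹ * Yw u' = Yw d * (Yw c)⁻¹ := by
          rw [Yw_append, Yw_append] at hcd
          rw [inv_mul_eq_iff_eq_mul, ← mul_assoc, ← hcd, mul_assoc, mul_inv_cancel, mul_one]
        refine ⟨u ++ d, v' ++ c, ?_⟩
        rw [Yw_append, Yw_append, mul_inv_rev]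
        calc Yw u * (Yw v)⁻¹ * (Yw u' * (Yw v')⁻¹)
            = Yw u * ((Yw v)⁻¹ * Yw u') * (Yw v')⁻¹ := by group
          _ = Yw u * (Yw d * (Yw c)⁻¹) * (Yw v')⁻¹ := by rw [e]
          _ = Yw u * Yw d * ((Yw c)⁻¹ * (Yw v')⁻¹) := by group
      inv_mem' := by
        rintro a ⟨u, v, rfl⟩
        exact ⟨v, u, by rw [mul_inv_rev, inv_inv]⟩ }
  exact PresentedGroup.generated_by brownRels S (fun j => ⟨[j], [], by simp [Yw, y]⟩) h

/-! ### Positivity -/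

theorem Xw_mem_Fpos (w : List ℕ) : Xw w ∈ Fpos :=
  Submonoid.list_prod_mem _ (by
    intro g hg
    rcases List.mem_map.1 hg with ⟨i, _, rfl⟩
    exact Submonoid.subset_closure ⟨i, rfl⟩)

theorem Yw_mem_F3pos (w : List ℕ) : Yw w ∈ F3pos :=
  Submonoid.list_prod_mem _ (by
    intro g hg
    rcases List.mem_map.1 hg with ⟨i, _, rfl⟩
    exact Submonoid.subset_closure ⟨i, rfl⟩)

theorem word_of_list : ∀ (l : List ThompsonF), (∀ e ∈ l, e ∈ Set.range x) →
    ∃ w, l.prod = Xw w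
  | [], _ => ⟨[], rfl⟩
  | e :: l, hl => by
    obtain ⟨i, rfl⟩ := hl e (List.mem_cons_self ..)
    obtain ⟨w, hw⟩ := word_of_list l (fun e he => hl e (List.mem_cons_of_mem _ he))
    exact ⟨i :: w, by rw [List.prod_cons, hw, Xw_cons]⟩

theorem exists_word_of_mem_Fpos {g : ThompsonF} (hg : g ∈ Fpos) : ∃ w, g = Xw w := by
  obtain ⟨l, hl, rfl⟩ := Submonoid.exists_list_of_mem_closure hg
  exact word_of_list l hl

/-! ### The image of `α` on positive words -/

theorem α_Yw (α : BrownF3 →* ThompsonF) (hα : ∀ n : ℕ, α (y n) = x n * x (n + 1))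
    (u : List ℕ) : α (Yw u) = Xw (Aw u) := by
  induction u with
  | nil => simp [Yw, Aw, Xw]
  | cons j u ih =>
    rw [Yw_cons, map_mul, hα, ih, show Aw (j :: u) = j :: (j + 1) :: Aw u from rfl,
      Xw_cons, Xw_cons, mul_assoc]

theorem peel : ∀ (v m : List ℕ), (∃ u, nfL (m ++ Aw v) = nfL (Aw u)) →
    ∃ w, nfL m = nfL (Aw w) := by
  intro v
  induction v using List.reverseRecOn with
  | nil =>
    intro m h
    simpa [Aw] using h
  | append_singleton v' k ih =>
    intro m ⟨u, hu⟩
    rw [show Aw (v' ++ [k]) = Aw v' ++ [k, k + 1] by rw [Aw_append]; rfl, ← List.append_assoc,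
      nfL_concat2] at hu
    obtain ⟨w₀, hw₀⟩ := key_lemma (nfL_sorted (m ++ Aw v')) hu
    exact ih m ⟨w₀, hw₀⟩

end ThGrpAux

open ThGrpAux in
/-- `α(F₃) ∩ F₊ = α(F₃,₊)`: an element `g` of `F` lies in both the range of `α` and
the positive monoid `F₊` iff `g = α(h)` for some `h ∈ F₃,₊`. -/
theorem alpha_range_inter_pos (α : BrownF3 →* ThompsonF)
    (hα : ∀ n : ℕ, α (y n) = x n * x (n + 1)) :
    ∀ g : ThompsonF, (g ∈ α.range ∧ g ∈ Fpos) ↔ ∃ h ∈ F3pos, g = α h := by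
  intro g
  constructor
  · rintro ⟨⟨h0, rfl⟩, hpos⟩
    obtain ⟨u, v, rfl⟩ := brown_frac h0
    obtain ⟨gw, hgw⟩ := exists_word_of_mem_Fpos hpos
    have hemain : Xw (Aw u) = Xw (gw ++ Aw v) := by
      have e1 : Xw (Aw u) = Xw gw * Xw (Aw v) := by
        rw [← α_Yw α hα u, ← α_Yw α hα v, ← hgw, ← map_mul]
        congr 1
        group
      rw [e1, ← Xw_append]
    have hnf : nfL (gw ++ Aw v) = nfL (Aw u) := nfL_eq_of_Xw_eq hemain.symm
    obtain ⟨w, hw⟩ := peel v gw ⟨u, hnf⟩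
    refine ⟨Yw w, Yw_mem_F3pos w, ?_⟩
    rw [α_Yw α hα, ← Xw_eq_of_nfL_eq hw, ← hgw]
  · rintro ⟨h, hh, rfl⟩
    refine ⟨⟨h, rfl⟩, ?_⟩
    obtain ⟨l, hl, rfl⟩ := Submonoid.exists_list_of_mem_closure hh
    induction l with
    | nil => simpa using Submonoid.one_mem _
    | cons e l ih =>
      obtain ⟨i, rfl⟩ := hl e (List.mem_cons_self ..)
      rw [List.prod_cons, map_mul, hα]
      refine Submonoid.mul_mem _
        (Submonoid.mul_mem _ (Submonoid.subset_closure ⟨i, rfl⟩)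
          (Submonoid.subset_closure ⟨i + 1, rfl⟩)) ?_
      exact ih (fun e he => hl e (List.mem_cons_of_mem _ he))
        (Submonoid.list_prod_mem _ (fun e he =>
          Submonoid.subset_closure (hl e (List.mem_cons_of_mem _ he))))
end
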